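/- arXiv:2412.08264 — 4 statements merged into one kernel-verified Lean document; each statement's English description precedes it below -/
import Mathlib

section
/- Let t, p be positive integers with p ≥ t, let H̃ ∈ ℝ^{t×t} be invertible and J̃ ∈ ℝ^{p×t}. Then there exist orthogonal matrices V_J ∈ ℝ^{p×p} and V_H ∈ ℝ^{t×t}, an invertible matrix X ∈ ℝ^{t×t}, and real numbers 0 ≤ α₁ ≤ … ≤ α_t < 1 and 1 ≥ β₁ ≥ … ≥ β_t > 0 with α_i² + β_i² = 1 for all i, such that V_J^T J̃ X is the p×t matrix whose top t×t block is diag(α₁,…,α_t) and whose remaining rows are zero, and V_H^T H̃ X = diag(β₁,…,β_t). -/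
/-!
Put `K = J̃ H̃⁻¹` and diagonalize `KᵀK = U diag(d) Uᵀ` with `U` orthogonal and `d` increasing.
The columns of `K U` are orthogonal with norms `√dᵢ`, so completing their normalizations to an
orthonormal basis gives an orthogonal `V_J` with `V_Jᵀ K U` rectangular diagonal with entries `√dᵢ`.
With `βᵢ = (1 + dᵢ)^(-1/2)`, `αᵢ = √dᵢ βᵢ`, `V_H = U` and `X = H̃⁻¹ U diag(β)`, both products become
diagonal: `V_Hᵀ H̃ X = diag(β)` and `V_Jᵀ J̃ X = V_Jᵀ K U diag(β)`.
-/

open Matrix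

theorem exists_orthonormalBasis_eq_norm_smul {𝕜 E ι : Type*} [RCLike 𝕜] [NormedAddCommGroup E]
    [InnerProductSpace 𝕜 E] [FiniteDimensional 𝕜 E] [Fintype ι]
    (card_ι : Module.finrank 𝕜 E = Fintype.card ι)
    {w : ι → E} (hw : Pairwise fun i j => inner 𝕜 (w i) (w j) = 0) :
    ∃ b : OrthonormalBasis ι 𝕜 E, ∀ i, w i = (‖w i‖ : 𝕜) • b i := by
  set v : ι → E := fun i => (‖w i‖⁻¹ : 𝕜) • w i
  have hv : Orthonormal 𝕜 (({i | w i ≠ 0} : Set ι).domRestrict v) := by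
    refine ⟨fun i => norm_smul_inv_norm i.2, fun i j hij => ?_⟩
    simp [v, inner_smul_left, inner_smul_right, hw (Subtype.coe_injective.ne hij)]
  obtain ⟨b, hb⟩ := hv.exists_orthonormalBasis_extension_of_card_eq card_ι
  refine ⟨b, fun i => ?_⟩
  by_cases hi : w i = 0
  · simp [hi]
  · rw [hb i hi, smul_inv_smul₀ (by simpa using hi)]

theorem Matrix.transpose_submatrix_mul_mul_submatrix {m n α : Type*} [Fintype m] [Fintype n]
    [NonUnitalNonAssocSemiring α] (U : Matrix m n α) (A : Matrix m m α) (σ : n ≃ n) :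
    (U.submatrix id σ)ᵀ * A * U.submatrix id σ = (Uᵀ * A * U).submatrix σ σ := by
  rw [transpose_submatrix, ← submatrix_id_id A, ← submatrix_mul_equiv _ _ _ (Equiv.refl m),
    ← submatrix_mul_equiv _ _ _ (Equiv.refl m)]
  rfl

theorem Matrix.IsHermitian.transpose_eigenvectorUnitary_mul_mul {n : Type*} [Fintype n]
    [DecidableEq n] {A : Matrix n n ℝ} (hA : A.IsHermitian) :
    (hA.eigenvectorUnitary : Matrix n n ℝ)ᵀ * A * hA.eigenvectorUnitary =
      diagonal hA.eigenvalues := by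
  simpa [Unitary.conjStarAlgAut_apply, star_eq_conjTranspose] using
    hA.conjStarAlgAut_star_eigenvectorUnitary

theorem Matrix.IsHermitian.transpose_eigenvectorUnitary_mul_self {n : Type*} [Fintype n]
    [DecidableEq n] {A : Matrix n n ℝ} (hA : A.IsHermitian) :
    (hA.eigenvectorUnitary : Matrix n n ℝ)ᵀ * hA.eigenvectorUnitary = 1 := by
  simpa [star_eq_conjTranspose] using Unitary.coe_star_mul_self hA.eigenvectorUnitary

theorem Matrix.IsHermitian.exists_orthogonal_transpose_mul_mul_eq_diagonal_sort {n : ℕ}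
    {A : Matrix (Fin n) (Fin n) ℝ} (hA : A.IsHermitian) :
    ∃ U : Matrix (Fin n) (Fin n) ℝ, Uᵀ * U = 1 ∧
      Uᵀ * A * U = diagonal (hA.eigenvalues ∘ Tuple.sort hA.eigenvalues) := by
  set U₀ : Matrix (Fin n) (Fin n) ℝ := (hA.eigenvectorUnitary : Matrix (Fin n) (Fin n) ℝ)
  set σ := Tuple.sort hA.eigenvalues
  refine ⟨U₀.submatrix id σ, ?_, ?_⟩
  · rw [← Matrix.mul_one (U₀.submatrix id σ)ᵀ, transpose_submatrix_mul_mul_submatrix, mul_one,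
      hA.transpose_eigenvectorUnitary_mul_self, submatrix_one_equiv]
  · rw [transpose_submatrix_mul_mul_submatrix, hA.transpose_eigenvectorUnitary_mul_mul,
      submatrix_diagonal_equiv]

theorem Matrix.exists_orthogonal_transpose_mul_eq_of_transpose_mul_self_eq_diagonal
    {m n : Type*} [Fintype m] [Fintype n] [DecidableEq m] [DecidableEq n]
    {B : Matrix m n ℝ} {d : n → ℝ} (hB : Bᵀ * B = diagonal d) (f : n ↪ m) :
    ∃ V : Matrix m m ℝ, Vᵀ * V = 1 ∧ Vᵀ * B = of fun i j => if i = f j then √(d j) else 0 := by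
  set c : n → EuclideanSpace ℝ m := fun j => WithLp.toLp 2 (Bᵀ j)
  have hc : ∀ j j', inner ℝ (c j) (c j') = diagonal d j j' := by
    intro j j'
    simp [c, ← hB, PiLp.inner_apply, mul_apply, mul_comm]
  have hc_norm : ∀ j, ‖c j‖ = √(d j) := by
    intro j
    rw [norm_eq_sqrt_real_inner, hc, diagonal_apply_eq]
  set w : m → EuclideanSpace ℝ m := Function.extend f c 0
  have hw_apply : ∀ j, w (f j) = c j := f.injective.extend_apply _ _
  have hw : Pairwise fun i i' => inner ℝ (w i) (w i') = 0 := by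
    intro i i' hii'
    by_cases hi : ∃ j, f j = i
    · by_cases hi' : ∃ j', f j' = i'
      · obtain ⟨j, rfl⟩ := hi
        obtain ⟨j', rfl⟩ := hi'
        rw [hw_apply, hw_apply, hc, diagonal_apply_ne _ (f.injective.ne_iff.mp hii')]
      · simp [w, Function.extend_apply' _ _ _ hi']
    · simp [w, Function.extend_apply' _ _ _ hi]
  obtain ⟨b, hb⟩ := exists_orthonormalBasis_eq_norm_smul finrank_euclideanSpace hw
  have hcb : ∀ j, c j = √(d j) • b (f j) := fun j => by
    simpa [hw_apply, hc_norm] using hb (f j)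
  refine ⟨(EuclideanSpace.basisFun m ℝ).toBasis.toMatrix b, ?_, ?_⟩
  · simpa [conjTranspose_eq_transpose_of_trivial] using
      (EuclideanSpace.basisFun m ℝ).toMatrix_orthonormalBasis_conjTranspose_mul_self b
  · ext i j
    have hentry : (((EuclideanSpace.basisFun m ℝ).toBasis.toMatrix b)ᵀ * B) i j =
        inner ℝ (b i) (c j) := by
      simp [c, mul_apply, Module.Basis.toMatrix_apply, PiLp.inner_apply, mul_comm]
    rw [hentry, hcb, inner_smul_right, orthonormal_iff_ite.mp b.orthonormal]
    simp

theorem Monotone.exists_sq_add_sq_eq_one_of_nonneg {ι : Type*} [Preorder ι] {d : ι → ℝ}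
    (hd : Monotone d) (hd0 : ∀ i, 0 ≤ d i) :
    ∃ α β : ι → ℝ, Monotone α ∧ Antitone β ∧ (∀ i, 0 ≤ α i) ∧ (∀ i, α i < 1) ∧
      (∀ i, 0 < β i) ∧ (∀ i, β i ≤ 1) ∧ (∀ i, α i ^ 2 + β i ^ 2 = 1) ∧
      ∀ i, α i = √(d i) * β i := by
  have h1d : ∀ i, 0 < 1 + d i := fun i => by linarith [hd0 i]
  have hβ0 : ∀ i, 0 < (√(1 + d i))⁻¹ := fun i => inv_pos.2 (Real.sqrt_pos.2 (h1d i))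
  have hαβ : ∀ i, (√(d i) * (√(1 + d i))⁻¹) ^ 2 + ((√(1 + d i))⁻¹) ^ 2 = 1 := fun i => by
    rw [mul_pow, inv_pow, Real.sq_sqrt (hd0 i), Real.sq_sqrt (h1d i).le, ← add_one_mul,
      add_comm, mul_inv_cancel₀ (h1d i).ne']
  refine ⟨fun i => √(d i) * (√(1 + d i))⁻¹, fun i => (√(1 + d i))⁻¹, fun i j hij => ?_,
    fun i j hij => ?_, fun i => by positivity, fun i => ?_, hβ0, fun i => ?_, hαβ, fun i => rfl⟩
  · simp only [← div_eq_mul_inv, ← Real.sqrt_div' _ (h1d _).le]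
    refine Real.sqrt_le_sqrt ?_
    rw [div_le_div_iff₀ (h1d i) (h1d j)]
    nlinarith [hd hij]
  · exact inv_anti₀ (Real.sqrt_pos.2 (h1d i)) (Real.sqrt_le_sqrt (by linarith [hd hij]))
  · nlinarith [hαβ i, hβ0 i]
  · exact inv_le_one_of_one_le₀ (Real.one_le_sqrt.2 (by linarith [hd0 i]))

theorem gsvd_existence_general (t p : ℕ) (htp : t ≤ p)
    (Htil : Matrix (Fin t) (Fin t) ℝ) (hH : IsUnit Htil.det)
    (Jtil : Matrix (Fin p) (Fin t) ℝ) :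
    ∃ (VJ : Matrix (Fin p) (Fin p) ℝ) (VH : Matrix (Fin t) (Fin t) ℝ)
      (X : Matrix (Fin t) (Fin t) ℝ) (α β : Fin t → ℝ),
      VJᵀ * VJ = 1 ∧ VHᵀ * VH = 1 ∧ IsUnit X.det ∧
      Monotone α ∧ Antitone β ∧
      (∀ i, 0 ≤ α i) ∧ (∀ i, α i < 1) ∧
      (∀ i, 0 < β i) ∧ (∀ i, β i ≤ 1) ∧
      (∀ i, α i ^ 2 + β i ^ 2 = 1) ∧
      VJᵀ * Jtil * X = Matrix.of (fun (i : Fin p) (j : Fin t) => if (i : ℕ) = (j : ℕ) then α j else 0) ∧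
      VHᵀ * Htil * X = diagonal β := by
  set K := Jtil * Htil⁻¹
  have hK : (Kᵀ * K).PosSemidef := by
    simpa [conjTranspose_eq_transpose_of_trivial] using posSemidef_conjTranspose_mul_self K
  obtain ⟨U, hU, hUKU⟩ := hK.isHermitian.exists_orthogonal_transpose_mul_mul_eq_diagonal_sort
  obtain ⟨V, hV, hVKU⟩ :=
    exists_orthogonal_transpose_mul_eq_of_transpose_mul_self_eq_diagonal (B := K * U)
      (by rw [transpose_mul, ← hUKU]; simp only [Matrix.mul_assoc]) (Fin.castLEEmb htp)
  obtain ⟨α, β, hα, hβ, hα0, hα1, hβ0, hβ1, hαβ, hαd⟩ :=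
    (Tuple.monotone_sort hK.isHermitian.eigenvalues).exists_sq_add_sq_eq_one_of_nonneg
      fun j => hK.eigenvalues_nonneg _
  refine ⟨V, U, Htil⁻¹ * U * diagonal β, α, β, hV, hU, ?_, hα, hβ, hα0, hα1, hβ0, hβ1, hαβ, ?_, ?_⟩
  · simp only [det_mul, det_diagonal]
    exact ((isUnit_nonsing_inv_det _ hH).mul (isUnit_det_of_left_inverse hU)).mul
      (isUnit_iff_ne_zero.2 (Finset.prod_ne_zero_iff.2 fun j _ => (hβ0 j).ne'))
  · calc Vᵀ * Jtil * (Htil⁻¹ * U * diagonal β) = Vᵀ * (K * U) * diagonal β := by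
          simp only [K, Matrix.mul_assoc]
      _ = _ := by
          rw [hVKU]
          ext i j
          simp [Fin.ext_iff, hαd]
  · calc Uᵀ * Htil * (Htil⁻¹ * U * diagonal β) = Uᵀ * U * diagonal β := by
          simp only [Matrix.mul_assoc, mul_nonsing_inv_cancel_left _ _ hH]
      _ = diagonal β := by rw [hU, one_mul]

/-- **Existence of the Generalized Singular Value Decomposition (GSVD).**
Given an invertible `H̃ ∈ ℝ^{t×t}` and `J̃ ∈ ℝ^{p×t}` with `p ≥ t`, there exist orthogonal
`V_J ∈ ℝ^{p×p}`, `V_H ∈ ℝ^{t×t}`, an invertible `X ∈ ℝ^{t×t}`, and reals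
`0 ≤ α₁ ≤ … ≤ α_t < 1`, `1 ≥ β₁ ≥ … ≥ β_t > 0` with `αᵢ² + βᵢ² = 1`, such that
`V_Jᵀ J̃ X` is the `p×t` matrix whose top `t×t` block is `diag(α)` (zero rows below) and
`V_Hᵀ H̃ X = diag(β)`. -/
theorem gsvd_existence (t p : ℕ) (ht : 0 < t) (htp : t ≤ p)
    (Htil : Matrix (Fin t) (Fin t) ℝ) (hH : IsUnit Htil.det)
    (Jtil : Matrix (Fin p) (Fin t) ℝ) :
    ∃ (VJ : Matrix (Fin p) (Fin p) ℝ) (VH : Matrix (Fin t) (Fin t) ℝ)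
      (X : Matrix (Fin t) (Fin t) ℝ) (α β : Fin t → ℝ),
      VJᵀ * VJ = 1 ∧ VHᵀ * VH = 1 ∧ IsUnit X.det ∧
      Monotone α ∧ Antitone β ∧
      (∀ i, 0 ≤ α i) ∧ (∀ i, α i < 1) ∧
      (∀ i, 0 < β i) ∧ (∀ i, β i ≤ 1) ∧
      (∀ i, α i ^ 2 + β i ^ 2 = 1) ∧
      VJᵀ * Jtil * X = Matrix.of (fun (i : Fin p) (j : Fin t) => if (i : ℕ) = (j : ℕ) then α j else 0) ∧
      VHᵀ * Htil * X = diagonal β :=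
  gsvd_existence_general t p htp Htil hH Jtil
end

section
/- Let H ∈ ℝ^{n×n}, let C ∈ ℝ^{n×s} satisfy C^T C = I_s, let V_{k+1} ∈ ℝ^{n×(k+1)} have orthonormal columns with C^T V_{k+1} = 0, and let V_k denote the first k columns of V_{k+1}. Suppose the augmented Lanczos relation (I − C C^T) H V_k = V_{k+1} T̄_k holds for some T̄_k ∈ ℝ^{(k+1)×k}, and let r₀ = β₁ V_{k+1} e₁ for some β₁ ∈ ℝ, where e₁ is the first standard basis vector of ℝ^{k+1}. Then for all y ∈ ℝᵏ and z ∈ ℝˢ, ‖r₀ − H V_k y − C z‖₂² = ‖β₁ e₁ − T̄_k y‖₂² + ‖C^T r₀ − C^T H V_k y − z‖₂². In particular, (y, z) minimizes the left-hand side if and only if y minimizes ‖β₁ e₁ − T̄_k y‖₂ and z = C^T r₀ − C^T H V_k y. -/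
open Matrix

/-- The Euclidean norm of a vector in `ℝ^m`. -/
noncomputable def nrm {m : ℕ} (v : Fin m → ℝ) : ℝ := Real.sqrt (∑ i, v i ^ 2)

lemma nrm_nonneg {m : ℕ} (v : Fin m → ℝ) : 0 ≤ nrm v := Real.sqrt_nonneg _

lemma nrm_sq {m : ℕ} (v : Fin m → ℝ) : nrm v ^ 2 = v ⬝ᵥ v := by
  have h : 0 ≤ ∑ i, v i ^ 2 := Finset.sum_nonneg fun i _ => sq_nonneg _
  rw [nrm, Real.sq_sqrt h, dotProduct]
  simp [sq]

lemma nrm_eq_zero {m : ℕ} (v : Fin m → ℝ) (h : nrm v = 0) : v = 0 := by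
  have h1 : nrm v ^ 2 = 0 := by rw [h]; ring
  rw [nrm_sq, dotProduct] at h1
  funext i
  have := (Finset.sum_eq_zero_iff_of_nonneg (fun i _ => mul_self_nonneg (v i))).mp h1 i (Finset.mem_univ i)
  have := mul_self_eq_zero.mp this
  simpa using this

lemma nrm_le_nrm {m m' : ℕ} (v : Fin m → ℝ) (w : Fin m' → ℝ)
    (h : nrm v ^ 2 ≤ nrm w ^ 2) : nrm v ≤ nrm w := by
  nlinarith [nrm_nonneg v, nrm_nonneg w]


/-- **Decoupling of the RMINRES coupled least-squares problem.**
Let `Cᵀ C = I`, let `V = V_{k+1}` have orthonormal columns with `Cᵀ V = 0`, let `V_k` be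
its first `k` columns, suppose the augmented Lanczos relation `(I − C Cᵀ) H V_k = V T̄_k`
holds, and let `r₀ = β₁ V e₁`. Then for all `y ∈ ℝᵏ`, `z ∈ ℝˢ`,
`‖r₀ − H V_k y − C z‖₂² = ‖β₁ e₁ − T̄_k y‖₂² + ‖Cᵀ r₀ − Cᵀ H V_k y − z‖₂²`;
in particular `(y, z)` minimizes the left-hand side iff `y` minimizes `‖β₁ e₁ − T̄_k y‖₂`
and `z = Cᵀ r₀ − Cᵀ H V_k y`. -/
theorem rminres_decoupling (n s k : ℕ)
    (H : Matrix (Fin n) (Fin n) ℝ) (C : Matrix (Fin n) (Fin s) ℝ)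
    (V : Matrix (Fin n) (Fin (k + 1)) ℝ) (T : Matrix (Fin (k + 1)) (Fin k) ℝ)
    (hC : Cᵀ * C = 1) (hV : Vᵀ * V = 1) (hCV : Cᵀ * V = 0)
    (Vk : Matrix (Fin n) (Fin k) ℝ)
    (hVk : Vk = V.submatrix id Fin.castSucc)
    (hLanczos : ((1 : Matrix (Fin n) (Fin n) ℝ) - C * Cᵀ) * H * Vk = V * T)
    (β₁ : ℝ) (e₁ : Fin (k + 1) → ℝ)
    (he₁ : e₁ = fun i => if i = 0 then 1 else 0)
    (r₀ : Fin n → ℝ) (hr₀ : r₀ = β₁ • V.mulVec e₁) :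
    (∀ (y : Fin k → ℝ) (z : Fin s → ℝ),
      nrm (r₀ - (H * Vk).mulVec y - C.mulVec z) ^ 2
        = nrm (β₁ • e₁ - T.mulVec y) ^ 2
          + nrm (Cᵀ.mulVec r₀ - (Cᵀ * H * Vk).mulVec y - z) ^ 2) ∧
    ∀ (y : Fin k → ℝ) (z : Fin s → ℝ),
      ((∀ (y' : Fin k → ℝ) (z' : Fin s → ℝ),
          nrm (r₀ - (H * Vk).mulVec y - C.mulVec z)
            ≤ nrm (r₀ - (H * Vk).mulVec y' - C.mulVec z'))
        ↔ ((∀ y' : Fin k → ℝ,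
              nrm (β₁ • e₁ - T.mulVec y) ≤ nrm (β₁ • e₁ - T.mulVec y'))
            ∧ z = Cᵀ.mulVec r₀ - (Cᵀ * H * Vk).mulVec y)) := by
  
  -- Cᵀ r₀ = 0
  have hCr : Cᵀ.mulVec r₀ = 0 := by
    rw [hr₀, Matrix.mulVec_smul, Matrix.mulVec_mulVec, hCV]
    simp
  -- H Vk = V T + C (Cᵀ H Vk)
  have hHVk : H * Vk = V * T + C * (Cᵀ * H * Vk) := by
    have hassoc : C * (Cᵀ * H * Vk) = C * Cᵀ * H * Vk := by
      rw [← Matrix.mul_assoc, ← Matrix.mul_assoc]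
    rw [← hLanczos, hassoc, Matrix.sub_mul, Matrix.sub_mul, Matrix.one_mul]
    abel
  -- decomposition
  have hdec : ∀ (y : Fin k → ℝ) (z : Fin s → ℝ),
      r₀ - (H * Vk).mulVec y - C.mulVec z
        = V.mulVec (β₁ • e₁ - T.mulVec y)
          + C.mulVec (Cᵀ.mulVec r₀ - (Cᵀ * H * Vk).mulVec y - z) := by
    intro y z
    rw [hHVk, Matrix.add_mulVec, hCr, Matrix.mulVec_sub, Matrix.mulVec_sub,
      Matrix.mulVec_sub, ← Matrix.mulVec_mulVec y V T, ← Matrix.mulVec_mulVec y C (Cᵀ * H * Vk), hr₀, Matrix.mulVec_smul]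
    simp only [Matrix.mulVec_zero]
    abel
  -- orthogonality: ‖Va + Cb‖² = ‖a‖² + ‖b‖²
  have hVC : Vᵀ * C = 0 := by
    have := congrArg Matrix.transpose hCV
    simpa using this
  have hpyth : ∀ (a : Fin (k+1) → ℝ) (b : Fin s → ℝ),
      nrm (V.mulVec a + C.mulVec b) ^ 2 = nrm a ^ 2 + nrm b ^ 2 := by
    intro a b
    have hVa : V.mulVec a ⬝ᵥ V.mulVec a = a ⬝ᵥ a := by
      rw [Matrix.dotProduct_mulVec, ← Matrix.vecMul_transpose,
        Matrix.vecMul_vecMul]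
      rw [show Vᵀ * V = 1 from hV]
      simp
    have hCb : C.mulVec b ⬝ᵥ C.mulVec b = b ⬝ᵥ b := by
      rw [Matrix.dotProduct_mulVec, ← Matrix.vecMul_transpose,
        Matrix.vecMul_vecMul, hC]
      simp
    have hVaCb : V.mulVec a ⬝ᵥ C.mulVec b = 0 := by
      rw [Matrix.dotProduct_mulVec, ← Matrix.vecMul_transpose,
        Matrix.vecMul_vecMul, hVC]
      simp
    have hCbVa : C.mulVec b ⬝ᵥ V.mulVec a = 0 := by
      rw [dotProduct_comm]; exact hVaCb
    rw [nrm_sq, nrm_sq, nrm_sq, dotProduct_add, add_dotProduct, add_dotProduct,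
      hVa, hCb, hVaCb, hCbVa]
    ring
  have key : ∀ (y : Fin k → ℝ) (z : Fin s → ℝ),
      nrm (r₀ - (H * Vk).mulVec y - C.mulVec z) ^ 2
        = nrm (β₁ • e₁ - T.mulVec y) ^ 2
          + nrm (Cᵀ.mulVec r₀ - (Cᵀ * H * Vk).mulVec y - z) ^ 2 := by
    intro y z
    rw [hdec y z, hpyth]
  refine ⟨key, ?_⟩
  intro y z
  set zopt : (Fin k → ℝ) → (Fin s → ℝ) := fun y' => Cᵀ.mulVec r₀ - (Cᵀ * H * Vk).mulVec y' with hzopt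
  have hopt : ∀ y', nrm (Cᵀ.mulVec r₀ - (Cᵀ * H * Vk).mulVec y' - zopt y') = 0 := by
    intro y'
    simp [hzopt, nrm]
  constructor
  · intro hmin
    have hz0 : nrm (Cᵀ.mulVec r₀ - (Cᵀ * H * Vk).mulVec y - z) = 0 := by
      have h1 := hmin y (zopt y)
      have h2 : nrm (r₀ - (H * Vk).mulVec y - C.mulVec z) ^ 2
          ≤ nrm (r₀ - (H * Vk).mulVec y - C.mulVec (zopt y)) ^ 2 :=
        pow_le_pow_left₀ (nrm_nonneg _) h1 2
      rw [key y z, key y (zopt y), hopt y] at h2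
      nlinarith [nrm_nonneg (Cᵀ.mulVec r₀ - (Cᵀ * H * Vk).mulVec y - z),
        sq_nonneg (nrm (Cᵀ.mulVec r₀ - (Cᵀ * H * Vk).mulVec y - z))]
    refine ⟨?_, ?_⟩
    · intro y'
      apply nrm_le_nrm
      have h1 := hmin y' (zopt y')
      have h2 : nrm (r₀ - (H * Vk).mulVec y - C.mulVec z) ^ 2
          ≤ nrm (r₀ - (H * Vk).mulVec y' - C.mulVec (zopt y')) ^ 2 :=
        pow_le_pow_left₀ (nrm_nonneg _) h1 2
      rw [key y z, key y' (zopt y'), hopt y'] at h2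
      nlinarith [sq_nonneg (nrm (Cᵀ.mulVec r₀ - (Cᵀ * H * Vk).mulVec y - z))]
    · have h0 : Cᵀ.mulVec r₀ - (Cᵀ * H * Vk).mulVec y - z = 0 := nrm_eq_zero _ hz0
      exact (sub_eq_zero.mp h0).symm
  · rintro ⟨hymin, hzeq⟩
    intro y' z'
    apply nrm_le_nrm
    rw [key y z, key y' z']
    have hz0 : nrm (Cᵀ.mulVec r₀ - (Cᵀ * H * Vk).mulVec y - z) = 0 := by
      rw [hzeq]; exact hopt y
    rw [hz0]
    have h1 := hymin y'
    have h2 : nrm (β₁ • e₁ - T.mulVec y) ^ 2 ≤ nrm (β₁ • e₁ - T.mulVec y') ^ 2 :=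
      pow_le_pow_left₀ (nrm_nonneg _) h1 2
    nlinarith [sq_nonneg (nrm (Cᵀ.mulVec r₀ - (Cᵀ * H * Vk).mulVec y' - z'))]
end

section
/- Let ℓ : ℝⁿ → ℝ be differentiable, let L : ℝⁿ × ℝᵖ → ℝ be twice continuously differentiable, and let x̂ : ℝᵖ → ℝⁿ be differentiable with ∇ₓ L(x̂(θ), θ) = 0 for all θ ∈ ℝᵖ. Define F(θ) = ℓ(x̂(θ)). Fix θ ∈ ℝᵖ and suppose H := D²ₓₓ L(x̂(θ), θ) is invertible. Then F is differentiable at θ with ∇F(θ) = − (D²_{θx} L(x̂(θ), θ))^T H^{-1} ∇ℓ(x̂(θ)); equivalently, ∇F(θ) = − (D²_{θx} L(x̂(θ), θ))^T w⋆ where w⋆ is the unique solution of the Hessian system H w⋆ = ∇ℓ(x̂(θ)). -/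
/-! Differentiating the optimality condition `∇ₓ L(x̂(t), t) = 0` at `t = θ` gives
`H ∘ Dx̂(θ) + D²_{θx} L = 0`, hence `Dx̂(θ) = -H⁻¹ D²_{θx} L`. The chain rule gives
`∇F(θ) = Dx̂(θ)ᵀ ∇ℓ(x̂(θ))`, and `H⁻¹` is its own transpose because the Hessian of a
`C²` function is symmetric. -/

open InnerProductSpace ContinuousLinearMap

section Implicit

variable {𝕜 : Type*} [NontriviallyNormedField 𝕜]
  {E P F : Type*} [NormedAddCommGroup E] [NormedSpace 𝕜 E] [NormedAddCommGroup P]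
  [NormedSpace 𝕜 P] [NormedAddCommGroup F] [NormedSpace 𝕜 F]

theorem fderiv_partial_comp_add_eq_zero {g : E × P → F} {xhat : P → E} {θ : P}
    (hg : DifferentiableAt 𝕜 g (xhat θ, θ)) (hxhat : DifferentiableAt 𝕜 xhat θ)
    (hzero : ∀ t, g (xhat t, t) = 0) :
    (fderiv 𝕜 (fun x => g (x, θ)) (xhat θ)).comp (fderiv 𝕜 xhat θ)
      + fderiv 𝕜 (fun t => g (xhat θ, t)) θ = 0 := by
  set D := fderiv 𝕜 g (xhat θ, θ)
  have hx : fderiv 𝕜 (fun x => g (x, θ)) (xhat θ) = D.comp (inl 𝕜 E P) :=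
    (hg.hasFDerivAt.comp (xhat θ) (hasFDerivAt_prodMk_left _ θ)).fderiv
  have ht : fderiv 𝕜 (fun t => g (xhat θ, t)) θ = D.comp (inr 𝕜 E P) :=
    (hg.hasFDerivAt.comp θ (hasFDerivAt_prodMk_right (xhat θ) θ)).fderiv
  have hpath : HasFDerivAt (fun t => g (xhat t, t))
      (D.comp ((fderiv 𝕜 xhat θ).prod (.id 𝕜 P))) θ :=
    hg.hasFDerivAt.comp (f := fun t => (xhat t, t)) θ
      (hxhat.hasFDerivAt.prodMk (hasFDerivAt_id θ))
  have hpath_zero : D.comp ((fderiv 𝕜 xhat θ).prod (.id 𝕜 P)) = 0 := by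
    rw [← hpath.fderiv, funext hzero, fderiv_const_apply]
  ext v
  simpa [hx, ht, ← map_add] using congr($hpath_zero v)

end Implicit

section InnerProduct

variable {E : Type*} [NormedAddCommGroup E] [InnerProductSpace ℝ E] [CompleteSpace E]

theorem gradient_comp_eq_adjoint_fderiv {P : Type*} [NormedAddCommGroup P]
    [InnerProductSpace ℝ P] [CompleteSpace P] {ℓ : E → ℝ} {xhat : P → E} {θ : P}
    (hℓ : DifferentiableAt ℝ ℓ (xhat θ)) (hxhat : DifferentiableAt ℝ xhat θ) :
    gradient (fun t => ℓ (xhat t)) θ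
      = adjoint (fderiv ℝ xhat θ) (gradient ℓ (xhat θ)) := by
  refine ext_inner_right ℝ fun v => ?_
  rw [inner_gradient_left, adjoint_inner_left, inner_gradient_left]
  exact congr($((hℓ.hasFDerivAt.comp θ hxhat.hasFDerivAt).fderiv) v)

theorem isSelfAdjoint_fderiv_gradient {f : E → ℝ} {x : E} (hf : ContDiffAt ℝ 2 f x) :
    IsSelfAdjoint (fderiv ℝ (gradient f) x) := by
  have hgrad : gradient f = (toDual ℝ E).symm.toContinuousLinearEquiv ∘ fderiv ℝ f := rfl
  have hsymm : IsSymmSndFDerivAt ℝ f x :=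
    hf.isSymmSndFDerivAt (by simp [minSmoothness_of_isRCLikeNormedField])
  refine LinearMap.IsSymmetric.isSelfAdjoint fun u v => ?_
  change ⟪fderiv ℝ (gradient f) x u, v⟫_ℝ = ⟪u, fderiv ℝ (gradient f) x v⟫_ℝ
  rw [hgrad, ContinuousLinearEquiv.comp_fderiv, ← real_inner_comm u, comp_apply, comp_apply,
    ContinuousLinearEquiv.coe_coe,
    LinearIsometryEquiv.coe_toContinuousLinearEquiv, toDual_symm_apply, toDual_symm_apply]
  exact hsymm u v

theorem ContinuousLinearEquiv.isSelfAdjoint_symm {e : E ≃L[ℝ] E}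
    (he : IsSelfAdjoint (e : E →L[ℝ] E)) : IsSelfAdjoint (e.symm : E →L[ℝ] E) := by
  refine LinearMap.IsSymmetric.isSelfAdjoint fun u v => ?_
  conv_lhs => rw [← e.apply_symm_apply v]
  conv_rhs => rw [← e.apply_symm_apply u]
  exact (he.isSymmetric _ _).symm

theorem ContDiff.differentiable_partialGradient {P : Type*} [NormedAddCommGroup P]
    [NormedSpace ℝ P] {L : E × P → ℝ} (hL : ContDiff ℝ 2 L) :
    Differentiable ℝ fun q : E × P => gradient (fun x => L (x, q.2)) q.1 := by
  have hpartial (q : E × P) :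
      fderiv ℝ (fun x => L (x, q.2)) q.1 = (fderiv ℝ L q).comp (inl ℝ E P) :=
    ((hL.differentiable two_ne_zero q).hasFDerivAt.comp q.1
      (hasFDerivAt_prodMk_left q.1 q.2)).fderiv
  simp only [gradient, hpartial]
  exact (toDual ℝ E).symm.toContinuousLinearEquiv.differentiable.comp
    (((hL.fderiv_right (m := 1) le_rfl).differentiable one_ne_zero).clm_comp
      (differentiable_const _))

end InnerProduct

/-- **Hypergradient formula.** Let `ℓ : ℝⁿ → ℝ` be differentiable, `L : ℝⁿ × ℝᵖ → ℝ` twice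
continuously differentiable, and `x̂ : ℝᵖ → ℝⁿ` differentiable with `∇ₓ L(x̂(θ), θ) = 0`
for all `θ`. Define `F(θ) = ℓ(x̂(θ))`. Fix `θ` and suppose the Hessian
`H := D²ₓₓ L(x̂(θ), θ)` is invertible, witnessed by a continuous linear equivalence `Hxx`.
Then `F` is differentiable at `θ` and
`∇F(θ) = − (D²_{θx} L(x̂(θ), θ))ᵀ H⁻¹ ∇ℓ(x̂(θ))`; equivalently,
`∇F(θ) = − (D²_{θx} L(x̂(θ), θ))ᵀ w⋆` for the unique solution `w⋆` of `H w⋆ = ∇ℓ(x̂(θ))`.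
(The transpose is the adjoint with respect to the Euclidean inner products.) -/
theorem hypergradient_formula (n p : ℕ)
    (ℓ : EuclideanSpace ℝ (Fin n) → ℝ) (hℓ : Differentiable ℝ ℓ)
    (L : EuclideanSpace ℝ (Fin n) × EuclideanSpace ℝ (Fin p) → ℝ)
    (hL : ContDiff ℝ 2 L)
    (xhat : EuclideanSpace ℝ (Fin p) → EuclideanSpace ℝ (Fin n))
    (hxhat : Differentiable ℝ xhat)
    (hcrit : ∀ θ, gradient (fun x => L (x, θ)) (xhat θ) = 0)
    (θ : EuclideanSpace ℝ (Fin p))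
    (Hxx : EuclideanSpace ℝ (Fin n) ≃L[ℝ] EuclideanSpace ℝ (Fin n))
    (hHxx : (Hxx : EuclideanSpace ℝ (Fin n) →L[ℝ] EuclideanSpace ℝ (Fin n))
      = fderiv ℝ (fun x => gradient (fun x' => L (x', θ)) x) (xhat θ)) :
    DifferentiableAt ℝ (fun t => ℓ (xhat t)) θ ∧
    gradient (fun t => ℓ (xhat t)) θ
      = -(ContinuousLinearMap.adjoint
            (fderiv ℝ (fun t => gradient (fun x' => L (x', t)) (xhat θ)) θ))
          (Hxx.symm (gradient ℓ (xhat θ))) ∧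
    ∀ w : EuclideanSpace ℝ (Fin n),
      Hxx w = gradient ℓ (xhat θ) →
        gradient (fun t => ℓ (xhat t)) θ
          = -(ContinuousLinearMap.adjoint
                (fderiv ℝ (fun t => gradient (fun x' => L (x', t)) (xhat θ)) θ)) w := by
  set B := fderiv ℝ (fun t => gradient (fun x' => L (x', t)) (xhat θ)) θ
  have hH : IsSelfAdjoint (Hxx : EuclideanSpace ℝ (Fin n) →L[ℝ] EuclideanSpace ℝ (Fin n)) :=
    hHxx ▸ isSelfAdjoint_fderiv_gradient (hL.comp (contDiff_id.prodMk contDiff_const)).contDiffAt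
  have himplicit : (Hxx : _ →L[ℝ] _).comp (fderiv ℝ xhat θ) + B = 0 :=
    hHxx ▸ fderiv_partial_comp_add_eq_zero (hL.differentiable_partialGradient _) (hxhat θ) hcrit
  have hDxhat : fderiv ℝ xhat θ = -((Hxx.symm : _ →L[ℝ] _).comp B) := by
    rw [eq_neg_of_add_eq_zero_right himplicit]
    ext v
    simp
  have hgrad :
      gradient (fun t => ℓ (xhat t)) θ = -(adjoint B) (Hxx.symm (gradient ℓ (xhat θ))) := by
    rw [gradient_comp_eq_adjoint_fderiv (hℓ _) (hxhat θ), hDxhat, map_neg, adjoint_comp,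
      (ContinuousLinearEquiv.isSelfAdjoint_symm hH).adjoint_eq]
    rfl
  refine ⟨(hℓ _).comp θ (hxhat θ), hgrad, fun w hw => ?_⟩
  rw [hgrad, ← hw, Hxx.symm_apply_apply]
end

section
/- Let H ∈ ℝ^{n×n} be symmetric and invertible, let W ∈ ℝ^{n×t}, let ρ ∈ ℝᵗ, and let θ̃ ∈ ℝ with θ̃ ≠ 0. Then (H W)^T (H W) ρ = θ̃ (H W)^T W ρ holds if and only if (H W)^T H^{-1} (H W) ρ = (1/θ̃) (H W)^T (H W) ρ. In particular, the nonzero generalized eigenvalues θ̃ of the pencil ((HW)^T HW, (HW)^T W) are the reciprocals of the Ritz values of H^{-1} with respect to the columns of H W. -/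
open Matrix

theorem harmonic_ritz_reciprocal_general (n t : ℕ)
    (H : Matrix (Fin n) (Fin n) ℝ) (W : Matrix (Fin n) (Fin t) ℝ)
    (hH : IsUnit H.det)
    (ρ : Fin t → ℝ) (θ : ℝ) (hθ : θ ≠ 0) :
    ((H * W)ᵀ * (H * W)).mulVec ρ = θ • ((H * W)ᵀ * W).mulVec ρ ↔
      ((H * W)ᵀ * H⁻¹ * (H * W)).mulVec ρ
        = (1 / θ) • (((H * W)ᵀ * (H * W)).mulVec ρ) := by
  rw [Matrix.mul_assoc _ H⁻¹, nonsing_inv_mul_cancel_left H W hH, one_div, eq_inv_smul_iff₀ hθ,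
    eq_comm]

/-- **Harmonic Ritz values as reciprocal Ritz values of `H⁻¹`.**
For symmetric invertible `H ∈ ℝ^{n×n}`, `W ∈ ℝ^{n×t}`, `ρ ∈ ℝᵗ` and `θ̃ ≠ 0`:
`(HW)ᵀ(HW) ρ = θ̃ (HW)ᵀ W ρ` iff `(HW)ᵀ H⁻¹ (HW) ρ = (1/θ̃) (HW)ᵀ(HW) ρ`.
In particular the nonzero generalized eigenvalues `θ̃` of the pencil
`((HW)ᵀHW, (HW)ᵀW)` are the reciprocals of the Ritz values of `H⁻¹` with respect to the
columns of `HW`. -/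
theorem harmonic_ritz_reciprocal (n t : ℕ)
    (H : Matrix (Fin n) (Fin n) ℝ) (W : Matrix (Fin n) (Fin t) ℝ)
    (hsymm : Hᵀ = H) (hH : IsUnit H.det)
    (ρ : Fin t → ℝ) (θ : ℝ) (hθ : θ ≠ 0) :
    ((H * W)ᵀ * (H * W)).mulVec ρ = θ • ((H * W)ᵀ * W).mulVec ρ ↔
      ((H * W)ᵀ * H⁻¹ * (H * W)).mulVec ρ
        = (1 / θ) • (((H * W)ᵀ * (H * W)).mulVec ρ) :=
  harmonic_ritz_reciprocal_general n t H W hH ρ θ hθ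
end
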